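/- arXiv:1112.6385 — 2 statements merged into one kernel-verified Lean document; each statement's English description precedes it below -/
import Mathlib

section
/- Let u(z) = (1-z^d)(1-z^{a+b+c-d})/((1-z^a)(1-z^b)(1-z^c)) with a,b,c,d positive integers, gcd(a,b,c)=1, and suppose that whenever a primitive m-th root of unity ζ ≠ 1 satisfies ζ^a = ζ^b = 1 (or any two of the three weight conditions), then ζ^d = 1. Then u(z) has only simple poles at all nonzero finite points of the complex plane. -/
/-!
For `n > 0` the polynomial `1 - X^n` is separable, so each `ζ` is a root of
`1 - X^n` of multiplicity `1` if `ζ^n = 1` and `0` otherwise. At `ζ = 1` the denominator of `u`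
vanishes to order `3` and the numerator to order `2`. At `ζ ≠ 1`, `gcd(a,b,c) = 1` prevents `ζ`
from killing all three weights, and if it kills two of them then it also kills `d`, so the
numerator makes up for all but one factor of the denominator.
-/

open Polynomial

theorem separable_one_sub_X_pow {F : Type*} [Field F] {n : ℕ} (hn : (n : F) ≠ 0) :
    (1 - X ^ n : F[X]).Separable := by
  rw [← neg_sub, ← neg_one_mul]
  exact Separable.unit_mul isUnit_one.neg (X_pow_sub_one_separable_iff.2 hn)

theorem rootMultiplicity_one_sub_X_pow {F : Type*} [Field F] [DecidableEq F] {n : ℕ}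
    (hn : (n : F) ≠ 0) (ζ : F) :
    rootMultiplicity ζ (1 - X ^ n : F[X]) = if ζ ^ n = 1 then 1 else 0 := by
  have hsep := separable_one_sub_X_pow hn
  split_ifs with h
  · exact (rootMultiplicity_le_one_of_separable hsep ζ).antisymm
      ((rootMultiplicity_pos hsep.ne_zero).2 (by simp [h]))
  · exact rootMultiplicity_eq_zero (by simp [sub_eq_zero, Ne.symm h])

theorem eq_one_of_pow_eq_one_of_gcd_eq_one {M : Type*} [Monoid M] {ζ : M} {a b c : ℕ}
    (hgcd : Nat.gcd a (Nat.gcd b c) = 1) (ha : ζ ^ a = 1) (hb : ζ ^ b = 1) (hc : ζ ^ c = 1) :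
    ζ = 1 := by
  simpa [hgcd] using pow_gcd_eq_one.2 ⟨ha, pow_gcd_eq_one.2 ⟨hb, hc⟩⟩

/-- `u(z) = (1-z^d)(1-z^{a+b+c-d})/((1-z^a)(1-z^b)(1-z^c))` has only simple
poles away from `0` and `∞`: at every `ζ ≠ 0`, the multiplicity of `ζ` as a
root of the denominator exceeds its multiplicity in the numerator by at most
`1`.  Hypotheses: `gcd(a,b,c) = 1`, `d < a+b+c`, and any root of unity `ζ ≠ 1`
killing two of the three weights satisfies `ζ^d = 1` (the isolated-singularity
condition). -/
theorem u_has_simple_poles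
    (a b c d : ℕ) (ha : 0 < a) (hb : 0 < b) (hc : 0 < c) (hd : 0 < d)
    (hgcd : Nat.gcd a (Nat.gcd b c) = 1) (hdabc : d < a + b + c)
    (hiso : ∀ ζ : ℂ, ζ ≠ 1 →
      ((ζ ^ a = 1 ∧ ζ ^ b = 1) ∨ (ζ ^ a = 1 ∧ ζ ^ c = 1) ∨
        (ζ ^ b = 1 ∧ ζ ^ c = 1)) → ζ ^ d = 1) :
    ∀ ζ : ℂ, ζ ≠ 0 →
      rootMultiplicity ζ
          ((1 - X ^ a) * (1 - X ^ b) * (1 - X ^ c) : Polynomial ℂ)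
        ≤ rootMultiplicity ζ
            ((1 - X ^ d) * (1 - X ^ (a + b + c - d)) : Polynomial ℂ) + 1 := by
  intro ζ _
  have he : 0 < a + b + c - d := by omega
  have hcast {n : ℕ} (hn : 0 < n) : (n : ℂ) ≠ 0 := Nat.cast_ne_zero.2 hn.ne'
  have hne {n : ℕ} (hn : 0 < n) := (separable_one_sub_X_pow (hcast hn)).ne_zero
  have hmult {n : ℕ} (hn : 0 < n) := rootMultiplicity_one_sub_X_pow (hcast hn) ζ
  rw [rootMultiplicity_mul (mul_ne_zero (mul_ne_zero (hne ha) (hne hb)) (hne hc)),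
    rootMultiplicity_mul (mul_ne_zero (hne ha) (hne hb)),
    rootMultiplicity_mul (mul_ne_zero (hne hd) (hne he)),
    hmult ha, hmult hb, hmult hc, hmult hd, hmult he]
  by_cases h1 : ζ = 1
  · simp [h1]
  have hnot3 : ¬(ζ ^ a = 1 ∧ ζ ^ b = 1 ∧ ζ ^ c = 1) := fun ⟨Ha, Hb, Hc⟩ =>
    h1 (eq_one_of_pow_eq_one_of_gcd_eq_one hgcd Ha Hb Hc)
  have hpair := hiso ζ h1
  split_ifs <;> first | omega | tauto
end

section
/- Let ξ be a primitive root of unity satisfying ξ^a = 1, ξ ≠ 1, and ξ^{d-b} = 1, with ξ^b, ξ^c, ξ^d, ξ^{a+b+c-d} all ≠ 1. Then the residue at z = ξ of the differential u(z)dz/z, where u(z) = (1-z^d)(1-z^{a+b+c-d})/((1-z^a)(1-z^b)(1-z^c)), equals -1/a; in particular it is rational. -/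
open Filter Topology

/-- Let `ξ` be a root of unity with `ξ^a = 1`, `ξ ≠ 1`, `ξ^{d-b} = 1`, and
`ξ^b, ξ^c, ξ^d, ξ^{a+b+c-d}` all `≠ 1`.  Then the residue at `z = ξ` of
`u(z)dz/z`, where `u(z) = (1-z^d)(1-z^{a+b+c-d})/((1-z^a)(1-z^b)(1-z^c))`,
i.e. the limit of `(z-ξ)·u(z)/z` as `z → ξ`, equals `-1/a`; in particular it
is rational. -/
theorem residue_of_u_at_simple_pole
    (a b c d : ℕ) (ha : 0 < a) (hb : 0 < b) (hc : 0 < c) (hd : 0 < d)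
    (ξ : ℂ) (hξa : ξ ^ a = 1) (hξ1 : ξ ≠ 1)
    (hξdb : ξ ^ ((d : ℤ) - b) = 1)
    (hξb : ξ ^ b ≠ 1) (hξc : ξ ^ c ≠ 1) (hξd : ξ ^ d ≠ 1)
    (hξabcd : ξ ^ ((a : ℤ) + b + c - d) ≠ 1) :
    Tendsto
      (fun z : ℂ =>
        (z - ξ) *
            ((1 - z ^ d) * (1 - z ^ ((a : ℤ) + b + c - d)) /
              ((1 - z ^ a) * (1 - z ^ b) * (1 - z ^ c))) / z)
      (𝓝[≠] ξ) (𝓝 (-1 / (a : ℂ))) := by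
  have hξ0 : ξ ≠ 0 := by
    intro h; rw [h, zero_pow ha.ne'] at hξa; exact zero_ne_one hξa
  -- ξ^d = ξ^b
  have hdb : ξ ^ (d : ℤ) = ξ ^ (b : ℤ) := by
    have := hξdb
    rw [zpow_sub₀ hξ0, div_eq_one_iff_eq (zpow_ne_zero _ hξ0)] at this
    exact this
  have hdbn : ξ ^ d = ξ ^ b := by
    have := hdb; rwa [zpow_natCast, zpow_natCast] at this
  -- ξ^(a+b+c-d) = ξ^c
  have he : ξ ^ ((a : ℤ) + b + c - d) = ξ ^ c := by
    rw [zpow_sub₀ hξ0, zpow_add₀ hξ0, zpow_add₀ hξ0, hdb, zpow_natCast,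
      zpow_natCast, zpow_natCast, hξa]
    field_simp [sub_ne_zero.mpr hξb]
  -- rewrite the function as a product of two pieces
  have hfun : ∀ z : ℂ,
      (z - ξ) * ((1 - z ^ d) * (1 - z ^ ((a : ℤ) + b + c - d)) /
        ((1 - z ^ a) * (1 - z ^ b) * (1 - z ^ c))) / z
      = ((1 - z ^ a - 0) / (z - ξ))⁻¹ *
        ((1 - z ^ d) * (1 - z ^ ((a : ℤ) + b + c - d)) /
          ((1 - z ^ b) * (1 - z ^ c) * z)) := by
    intro z
    rw [inv_div, div_mul_div_comm, ← mul_div_assoc, div_div]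
    congr 1
    ring
  have hderiv : HasDerivAt (fun z : ℂ => 1 - z ^ a) (-((a : ℂ) * ξ ^ (a - 1))) ξ := by
    simpa using (hasDerivAt_pow a ξ).const_sub 1
  have hslope : Tendsto (fun z : ℂ => (1 - z ^ a - 0) / (z - ξ)) (𝓝[≠] ξ)
      (𝓝 (-((a : ℂ) * ξ ^ (a - 1)))) := by
    have h := hasDerivAt_iff_tendsto_slope.mp hderiv
    refine h.congr fun z => ?_
    simp [slope_def_field, hξa]
  have hne : -((a : ℂ) * ξ ^ (a - 1)) ≠ 0 := by
    apply neg_ne_zero.mpr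
    exact mul_ne_zero (Nat.cast_ne_zero.mpr ha.ne') (pow_ne_zero _ hξ0)
  have h1 : Tendsto (fun z : ℂ => ((1 - z ^ a - 0) / (z - ξ))⁻¹) (𝓝[≠] ξ)
      (𝓝 ((-((a : ℂ) * ξ ^ (a - 1)))⁻¹)) := hslope.inv₀ hne
  -- second factor is continuous at ξ with nonzero denominator
  have hdenne : (1 - ξ ^ b) * (1 - ξ ^ c) * ξ ≠ 0 :=
    mul_ne_zero (mul_ne_zero (sub_ne_zero.mpr (Ne.symm hξb))
      (sub_ne_zero.mpr (Ne.symm hξc))) hξ0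
  have h2 : Tendsto (fun z : ℂ => (1 - z ^ d) * (1 - z ^ ((a : ℤ) + b + c - d)) /
      ((1 - z ^ b) * (1 - z ^ c) * z)) (𝓝[≠] ξ)
      (𝓝 ((1 - ξ ^ d) * (1 - ξ ^ ((a : ℤ) + b + c - d)) /
        ((1 - ξ ^ b) * (1 - ξ ^ c) * ξ))) := by
    apply Tendsto.mono_left _ nhdsWithin_le_nhds
    apply ContinuousAt.div
    · exact (continuousAt_const.sub (continuousAt_pow _ _)).mul
        (continuousAt_const.sub (continuousAt_id.zpow₀ _ (Or.inl hξ0)))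
    · fun_prop
    · exact hdenne
  have hprod := h1.mul h2
  have hval : (-((a : ℂ) * ξ ^ (a - 1)))⁻¹ *
      ((1 - ξ ^ d) * (1 - ξ ^ ((a : ℤ) + b + c - d)) /
        ((1 - ξ ^ b) * (1 - ξ ^ c) * ξ)) = -1 / (a : ℂ) := by
    rw [hdbn, he]
    have hpow : ξ ^ (a - 1) * ξ = 1 := by
      rw [← pow_succ, Nat.sub_add_cancel ha]; exact hξa
    have ha0 : (a : ℂ) ≠ 0 := Nat.cast_ne_zero.mpr ha.ne'
    have hfac : (1 - ξ ^ b) * (1 - ξ ^ c) / ((1 - ξ ^ b) * (1 - ξ ^ c) * ξ) = ξ⁻¹ := by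
      field_simp
    rw [hfac, ← mul_inv]
    have h3 : -((a : ℂ) * ξ ^ (a - 1)) * ξ = -(a : ℂ) := by
      rw [neg_mul, mul_assoc, hpow, mul_one]
    rw [h3]
    simp [neg_div, one_div, inv_neg]
  rw [← hval]
  exact hprod.congr (fun z => (hfun z).symm)
end
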